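/- (Corollary 1, convergence with inexact subproblem solutions.) In the inexact setting, assume ‖ε^t‖² ≤ c₁‖Δ^{(t−1)}‖² for all t ≥ 1 and ε^0 = 0, for some c₁ > 0; assume there exist δ > 0 with γ > 3L + 2Lδτ + 1 and ρ > 2Lτ/δ + c₁, and a constant L̲ ∈ ℝ with 𝓛(x) > L̲ for all x. Then x^{t+1} − x^t → 0, the proximal gradients satisfy ‖∇̃𝓛(x^t)‖ ≤ (2 + ρ)‖Δ^{(t)}‖ + 2L Σ_{k=0}^{τ} ‖Δ^{(t−k)}‖ + √c₁ ‖Δ^{(t−1)}‖ for all t ≥ 0, ‖∇̃𝓛(x^t)‖ → 0 as t → ∞, and every limit point x̂ of {x^t} is a stationary point of 𝓛, i.e. x̂ = Prox_h(x̂ − (1/m)Σ_{j=1}^m ∇L_j(x̂)). -/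

import Mathlib

open scoped RealInnerProductSpace


theorem aux_subgrad_strong {E : Type*} [NormedAddCommGroup E] [InnerProductSpace ℝ E]
    {φ : E → ℝ} {γ : ℝ}
    (hmid : ∀ a b : E, φ ((1/2 : ℝ) • a + (1/2 : ℝ) • b) ≤ 1/2 * φ a + 1/2 * φ b - γ/8 * ‖a - b‖ ^ 2)
    {x₀ s : E} (hs : ∀ y, φ x₀ + ⟪s, y - x₀⟫ ≤ φ y) :
    ∀ y, φ x₀ + ⟪s, y - x₀⟫ + γ/2 * ‖y - x₀‖ ^ 2 ≤ φ y := by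
  have key : ∀ n : ℕ, ∀ y, φ x₀ + ⟪s, y - x₀⟫ + (γ/2 * (1 - (1/2)^n)) * ‖y - x₀‖ ^ 2 ≤ φ y := by
    intro n
    induction n with
    | zero => simpa using hs
    | succ n ih =>
      intro y
      have h1 := ih ((1/2 : ℝ) • x₀ + (1/2 : ℝ) • y)
      have h2 := hmid x₀ y
      have e1 : ((1/2 : ℝ) • x₀ + (1/2 : ℝ) • y) - x₀ = (1/2 : ℝ) • (y - x₀) := by module
      rw [e1, real_inner_smul_right, norm_smul] at h1
      have e2 : ‖x₀ - y‖ = ‖y - x₀‖ := norm_sub_rev _ _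
      rw [e2] at h2
      have e3 : ‖(1/2 : ℝ)‖ = 1/2 := by norm_num
      rw [e3] at h1
      have hco : γ / 2 * (1 - (1/2:ℝ)^(n+1)) * ‖y - x₀‖^2
          = 2 * (γ/2*(1-(1/2:ℝ)^n) * (1/2 * ‖y-x₀‖)^2) + 2 * (γ/8 * ‖y-x₀‖^2) := by ring
      linarith [h1, h2, hco]
  intro y
  have hc : Filter.Tendsto (fun n : ℕ => φ x₀ + ⟪s, y - x₀⟫ + (γ/2 * (1 - (1/2)^n)) * ‖y - x₀‖ ^ 2)
      Filter.atTop (nhds (φ x₀ + ⟪s, y - x₀⟫ + (γ/2 * (1 - 0)) * ‖y - x₀‖ ^ 2)) := by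
    refine Filter.Tendsto.add tendsto_const_nhds ?_
    refine Filter.Tendsto.mul_const _ (Filter.Tendsto.const_mul _ ?_)
    exact (tendsto_const_nhds).sub (tendsto_pow_atTop_nhds_zero_of_lt_one (by norm_num) (by norm_num))
  have := le_of_tendsto hc (Filter.Eventually.of_forall (fun n => key n y))
  simpa using this


theorem aux_descent {E : Type*} [NormedAddCommGroup E] [InnerProductSpace ℝ E] [CompleteSpace E]
    {f : E → ℝ} {L : ℝ}
    (hd : Differentiable ℝ f)
    (hl : ∀ u v, ‖gradient f u - gradient f v‖ ≤ L * ‖u - v‖) (x y : E) :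
    f y ≤ f x + ⟪gradient f x, y - x⟫ + L/2 * ‖y - x‖ ^ 2 := by
  set d := y - x with hdd
  have hline : ∀ t : ℝ, HasDerivAt (fun t : ℝ => x + t • d) d t := by
    intro t
    simpa using ((hasDerivAt_id t).smul_const d).const_add x
  have hg : ∀ t : ℝ, HasDerivAt (fun t : ℝ => f (x + t • d)) ⟪gradient f (x + t • d), d⟫ t := by
    intro t
    have hf : HasFDerivAt f (InnerProductSpace.toDual ℝ E (gradient f (x + t • d))) (x + t • d) :=
      hasGradientAt_iff_hasFDerivAt.1 (hd (x + t • d)).hasGradientAt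
    have := hf.comp_hasDerivAt t (hline t)
    rw [InnerProductSpace.toDual_apply_apply] at this
    exact this
  set ψ : ℝ → ℝ := fun t => f (x + t • d) - t * ⟪gradient f x, d⟫ - L/2 * t^2 * ‖d‖^2 with hψ
  have hψd : ∀ t : ℝ, HasDerivAt ψ (⟪gradient f (x + t • d), d⟫ - ⟪gradient f x, d⟫ - L * t * ‖d‖^2) t := by
    intro t
    have h1 : HasDerivAt (fun t : ℝ => t * ⟪gradient f x, d⟫) ⟪gradient f x, d⟫ t := by
      simpa using (hasDerivAt_id t).mul_const ⟪gradient f x, d⟫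
    have h2 : HasDerivAt (fun t : ℝ => L/2 * t^2 * ‖d‖^2) (L * t * ‖d‖^2) t := by
      have := ((hasDerivAt_pow 2 t).const_mul (L/2)).mul_const (‖d‖^2)
      rw [show L * t * ‖d‖^2 = L/2 * (↑2 * t ^ (2 - 1)) * ‖d‖^2 by ring]
      exact this
    exact ((hg t).sub h1).sub h2
  have hmono : AntitoneOn ψ (Set.Icc 0 1) := by
    apply antitoneOn_of_deriv_nonpos (convex_Icc 0 1)
    · exact (fun t _ => ((hψd t).continuousAt.continuousWithinAt))
    · exact fun t _ => ((hψd t).differentiableAt.differentiableWithinAt)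
    · intro t ht
      rw [interior_Icc] at ht
      rw [(hψd t).deriv]
      have h3 : ⟪gradient f (x + t • d) - gradient f x, d⟫ ≤ L * t * ‖d‖^2 := by
        calc ⟪gradient f (x + t • d) - gradient f x, d⟫ ≤ ‖gradient f (x + t • d) - gradient f x‖ * ‖d‖ :=
              real_inner_le_norm _ _
          _ ≤ (L * ‖(x + t • d) - x‖) * ‖d‖ := by
              apply mul_le_mul_of_nonneg_right (hl _ _) (norm_nonneg _)
          _ = L * t * ‖d‖^2 := by
              rw [add_sub_cancel_left, norm_smul, Real.norm_eq_abs, abs_of_pos ht.1]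
              ring
      rw [inner_sub_left] at h3
      linarith
  have := hmono (Set.left_mem_Icc.2 zero_le_one) (Set.right_mem_Icc.2 zero_le_one) zero_le_one
  simp only [hψ] at this
  norm_num at this
  rw [show x + d = y by rw [hdd]; abel] at this
  have e : ⟪gradient f x, d⟫ = (fderiv ℝ f x) d := by simp
  linarith [this, e]

theorem aux_quad_mid {E : Type*} [NormedAddCommGroup E] [InnerProductSpace ℝ E] (a b z : E) :
    ‖(1/2:ℝ)•a + (1/2:ℝ)•b - z‖^2 = 1/2*‖a-z‖^2 + 1/2*‖b-z‖^2 - 1/4*‖a-b‖^2 := by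
  have e : (1/2:ℝ)•a+(1/2:ℝ)•b - z = (1/2:ℝ)•((a-z)+(b-z)) := by module
  have e2 : a - b = (a-z) - (b-z) := by abel
  have hn : ‖(1/2:ℝ)‖ = 1/2 := by norm_num
  have h1 : ‖(a-z)+(b-z)‖^2 = ‖a-z‖^2 + 2*⟪a-z,b-z⟫ + ‖b-z‖^2 := norm_add_sq_real _ _
  have h2 : ‖(a-z)-(b-z)‖^2 = ‖a-z‖^2 - 2*⟪a-z,b-z⟫ + ‖b-z‖^2 := norm_sub_sq_real _ _
  rw [e, e2, norm_smul, hn, mul_pow, h1, h2]; ring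

theorem aux_phimid {E : Type*} [NormedAddCommGroup E] [InnerProductSpace ℝ E]
    {h : E → ℝ} (hconv : ConvexOn ℝ Set.univ h) (z : E) :
    ∀ a b : E, (fun y => h y + 1/2*‖y - z‖^2) ((1/2 : ℝ) • a + (1/2 : ℝ) • b) ≤
      1/2 * (fun y => h y + 1/2*‖y - z‖^2) a + 1/2 * (fun y => h y + 1/2*‖y - z‖^2) b
        - (1:ℝ)/8 * ‖a - b‖ ^ 2 := by
  intro a b
  have hc := hconv.2 (Set.mem_univ a) (Set.mem_univ b) (by norm_num : (0:ℝ) ≤ 1/2)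
    (by norm_num : (0:ℝ) ≤ 1/2) (by norm_num)
  simp only [smul_eq_mul] at hc
  have hq := aux_quad_mid a b z
  simp only
  linarith [hc, hq]

theorem aux_prox_strong {E : Type*} [NormedAddCommGroup E] [InnerProductSpace ℝ E]
    {h : E → ℝ} (hconv : ConvexOn ℝ Set.univ h)
    {prox : E → E} (hprox : ∀ z y, h (prox z) + 1 / 2 * ‖prox z - z‖ ^ 2 ≤ h y + 1 / 2 * ‖y - z‖ ^ 2) :
    ∀ z y, h (prox z) + 1/2 * ‖prox z - z‖^2 + 1/2 * ‖y - prox z‖^2 ≤ h y + 1/2 * ‖y - z‖^2 := by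
  intro z y
  have key := aux_subgrad_strong (φ := fun y => h y + 1/2*‖y - z‖^2) (γ := 1)
    (aux_phimid hconv z) (x₀ := prox z) (s := 0) ?_ y
  · simpa using key
  · intro w
    simpa using hprox z w

theorem aux_prox_lip {E : Type*} [NormedAddCommGroup E] [InnerProductSpace ℝ E]
    {h : E → ℝ} (hconv : ConvexOn ℝ Set.univ h)
    {prox : E → E} (hprox : ∀ z y, h (prox z) + 1 / 2 * ‖prox z - z‖ ^ 2 ≤ h y + 1 / 2 * ‖y - z‖ ^ 2) :
    ∀ z₁ z₂, ‖prox z₁ - prox z₂‖ ≤ ‖z₁ - z₂‖ := by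
  intro z₁ z₂
  have h1 := aux_prox_strong hconv hprox z₁ (prox z₂)
  have h2 := aux_prox_strong hconv hprox z₂ (prox z₁)
  set p₁ := prox z₁
  set p₂ := prox z₂
  have hid : ‖p₂-z₁‖^2 - ‖p₂-z₂‖^2 + ‖p₁-z₂‖^2 - ‖p₁-z₁‖^2 = 2*⟪p₁-p₂, z₁-z₂⟫ := by
    rw [inner_sub_left, inner_sub_right, inner_sub_right,
      norm_sub_sq_real, norm_sub_sq_real, norm_sub_sq_real, norm_sub_sq_real]
    ring
  have hsq : ‖p₁ - p₂‖^2 ≤ ⟪p₁-p₂, z₁-z₂⟫ := by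
    have e1 : ‖p₂ - p₁‖ = ‖p₁ - p₂‖ := norm_sub_rev _ _
    rw [e1] at h1
    linarith [h1, h2, hid]
  have hcs : ⟪p₁-p₂, z₁-z₂⟫ ≤ ‖p₁-p₂‖ * ‖z₁-z₂‖ := real_inner_le_norm _ _
  rcases eq_or_lt_of_le (norm_nonneg (p₁ - p₂)) with hz | hz
  · rw [← hz]; exact norm_nonneg _
  · nlinarith [hsq, hcs]
set_option maxHeartbeats 1000000 in
theorem stmt_18
    {p m τ : ℕ} (hp : 1 ≤ p) (hm : 0 < m)
    {L ρ γ : ℝ}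
    (hL : 0 < L) (hρ : 0 < ρ) (hγ : 0 < γ)
    (Lf : Fin m → EuclideanSpace ℝ (Fin p) → ℝ)
    (hdiff : ∀ j, Differentiable ℝ (Lf j))
    (hlip : ∀ j (u v : EuclideanSpace ℝ (Fin p)), ‖gradient (Lf j) u - gradient (Lf j) v‖ ≤ L * ‖u - v‖)
    (h : EuclideanSpace ℝ (Fin p) → ℝ)
    (hconv : ConvexOn ℝ Set.univ h)
    (hstrong : ∀ z : EuclideanSpace ℝ (Fin p), StrongConvexOn Set.univ γ (fun y => h y + ρ / 2 * ‖y - z‖ ^ 2))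
    (tj : ℕ → Fin m → ℕ)
    (htj : ∀ t j, t - τ ≤ tj t j ∧ tj t j ≤ t)
    (x : ℕ → EuclideanSpace ℝ (Fin p))
    (eps : ℕ → EuclideanSpace ℝ (Fin p))
    (hsub : ∀ t (y : EuclideanSpace ℝ (Fin p)),
      h (x (t + 1)) + ⟪eps t - gradient (Lf ⟨0, hm⟩) (x (t + 1)) - (((m : ℝ)⁻¹ • ∑ j, gradient (Lf j) (x (tj t j)))) +
          gradient (Lf ⟨0, hm⟩) (x (tj t ⟨0, hm⟩)) - ρ • (x (t + 1) - x t), y - x (t + 1)⟫ ≤ h y)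
    (Δ : ℤ → EuclideanSpace ℝ (Fin p))
    (hΔ : ∀ s : ℤ, 0 ≤ s → Δ s = x (s.toNat + 1) - x s.toNat)
    (hΔneg : ∀ s : ℤ, s < 0 → Δ s = 0)
    (prox : EuclideanSpace ℝ (Fin p) → EuclideanSpace ℝ (Fin p))
    (hprox : ∀ z y, h (prox z) + 1 / 2 * ‖prox z - z‖ ^ 2 ≤ h y + 1 / 2 * ‖y - z‖ ^ 2)
    (hproxuniq : ∀ z y, (∀ w, h y + 1 / 2 * ‖y - z‖ ^ 2 ≤ h w + 1 / 2 * ‖w - z‖ ^ 2) → y = prox z)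
    (c₁ : ℝ) (hc₁ : 0 < c₁)
    (herr : ∀ t : ℕ, 1 ≤ t → ‖eps t‖ ^ 2 ≤ c₁ * ‖Δ ((t : ℤ) - 1)‖ ^ 2)
    (heps0 : eps 0 = 0)
    (δ : ℝ) (hδ : 0 < δ)
    (hA1 : 3 * L + 2 * L * δ * τ + 1 < γ)
    (hA2 : 2 * L * τ / δ + c₁ < ρ)
    (Llo : ℝ) (hLlo : ∀ y : EuclideanSpace ℝ (Fin p), Llo < (((m : ℝ)⁻¹ * ∑ j, Lf j (y)) + h (y)))
    :
    Filter.Tendsto (fun t => x (t + 1) - x t) Filter.atTop (nhds 0) ∧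
      (∀ t : ℕ, ‖(x t - prox (x t - (m : ℝ)⁻¹ • (∑ j, gradient (Lf j) (x t))))‖ ≤
        (2 + ρ) * ‖Δ (t : ℤ)‖ + 2 * L * ∑ k ∈ Finset.range (τ + 1), ‖Δ ((t : ℤ) - (k : ℤ))‖ +
          Real.sqrt c₁ * ‖Δ ((t : ℤ) - 1)‖) ∧
      Filter.Tendsto (fun t => ‖(x t - prox (x t - (m : ℝ)⁻¹ • (∑ j, gradient (Lf j) (x t))))‖) Filter.atTop (nhds 0) ∧
      ∀ xhat : EuclideanSpace ℝ (Fin p),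
        (∃ φ : ℕ → ℕ, StrictMono φ ∧ Filter.Tendsto (fun n => x (φ n)) Filter.atTop (nhds xhat)) →
        xhat = prox (xhat - (m : ℝ)⁻¹ • (∑ j, gradient (Lf j) xhat)) := by
  have hm' : (0:ℝ) < m := by exact_mod_cast hm
  -- basic Δ facts
  have hΔnat : ∀ t : ℕ, Δ (t:ℤ) = x (t+1) - x t := by
    intro t
    simpa using hΔ t (by positivity)
  -- telescoping
  have htel : ∀ N : ℕ, x N - x 0 = ∑ s ∈ Finset.range N, Δ (s:ℤ) := by
    intro N
    induction N with
    | zero => simp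
    | succ n ih => rw [Finset.sum_range_succ, ← ih, hΔnat n]; abel
  have hxtel : ∀ t r : ℕ, r ≤ t → x t - x r = ∑ s ∈ Finset.Ico r t, Δ (s:ℤ) := by
    intro t r hrt
    rw [Finset.sum_Ico_eq_sub _ hrt, ← htel t, ← htel r]
    abel
  -- bound on ‖x t - x r‖ for delayed index r
  have hB : ∀ t r : ℕ, t - τ ≤ r → r ≤ t →
      ‖x t - x r‖ ≤ ∑ k ∈ Finset.range τ, ‖Δ ((t:ℤ) - (k:ℤ) - 1)‖ := by
    intro t r hτr hrt
    have h1 : ‖x t - x r‖ ≤ ∑ s ∈ Finset.Ico r t, ‖Δ (s:ℤ)‖ := by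
      rw [hxtel t r hrt]; exact norm_sum_le _ _
    have h2 : ∑ s ∈ Finset.Ico r t, ‖Δ (s:ℤ)‖ = ∑ k ∈ Finset.range (t - r), ‖Δ ((t:ℤ) - (k:ℤ) - 1)‖ := by
      refine Finset.sum_nbij' (fun s => t - s - 1) (fun k => t - k - 1) ?_ ?_ ?_ ?_ ?_
      · intro a ha
        rw [Finset.mem_Ico] at ha
        rw [Finset.mem_range]
        show t - a - 1 < t - r
        omega
      · intro a ha
        rw [Finset.mem_range] at ha
        rw [Finset.mem_Ico]
        show r ≤ t - a - 1 ∧ t - a - 1 < t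
        omega
      · intro a ha
        rw [Finset.mem_Ico] at ha
        show t - (t - a - 1) - 1 = a
        omega
      · intro a ha
        rw [Finset.mem_range] at ha
        show t - (t - a - 1) - 1 = a
        omega
      · intro a ha
        rw [Finset.mem_Ico] at ha
        have e4 : (t:ℤ) - ((t - a - 1 : ℕ):ℤ) - 1 = (a:ℤ) := by omega
        show ‖Δ (a:ℤ)‖ = ‖Δ ((t:ℤ) - ((t - a - 1 : ℕ):ℤ) - 1)‖
        rw [e4]
    have h3 : ∑ k ∈ Finset.range (t - r), ‖Δ ((t:ℤ) - (k:ℤ) - 1)‖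
        ≤ ∑ k ∈ Finset.range τ, ‖Δ ((t:ℤ) - (k:ℤ) - 1)‖ :=
      Finset.sum_le_sum_of_subset_of_nonneg (Finset.range_subset_range.2 (show t - r ≤ τ by omega))
        (fun _ _ _ => norm_nonneg _)
    linarith
  -- bound on gradient average mismatch
  have hgd : ∀ t : ℕ, ‖(m:ℝ)⁻¹ • ∑ j, gradient (Lf j) (x t) - (m:ℝ)⁻¹ • ∑ j, gradient (Lf j) (x (tj t j))‖
      ≤ L * ∑ k ∈ Finset.range τ, ‖Δ ((t:ℤ) - (k:ℤ) - 1)‖ := by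
    intro t
    have e : (m:ℝ)⁻¹ • ∑ j, gradient (Lf j) (x t) - (m:ℝ)⁻¹ • ∑ j, gradient (Lf j) (x (tj t j))
        = (m:ℝ)⁻¹ • ∑ j, (gradient (Lf j) (x t) - gradient (Lf j) (x (tj t j))) := by
      rw [Finset.sum_sub_distrib, smul_sub]
    rw [e, norm_smul]
    have hbnd : ‖∑ j, (gradient (Lf j) (x t) - gradient (Lf j) (x (tj t j)))‖
        ≤ ∑ _j : Fin m, (L * ∑ k ∈ Finset.range τ, ‖Δ ((t:ℤ) - (k:ℤ) - 1)‖) := by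
      refine (norm_sum_le _ _).trans (Finset.sum_le_sum ?_)
      intro j _
      refine (hlip j _ _).trans ?_
      exact mul_le_mul_of_nonneg_left (hB t (tj t j) (htj t j).1 (htj t j).2) hL.le
    rw [Finset.sum_const, Finset.card_univ, Fintype.card_fin, nsmul_eq_mul] at hbnd
    have hnorm : ‖(m:ℝ)⁻¹‖ = (m:ℝ)⁻¹ := by
      rw [Real.norm_eq_abs, abs_of_pos (by positivity)]
    rw [hnorm]
    have h2 := mul_le_mul_of_nonneg_left hbnd (le_of_lt (inv_pos.2 hm'))
    have h3 : (m:ℝ)⁻¹ * ((m:ℝ) * (L * ∑ k ∈ Finset.range τ, ‖Δ ((t:ℤ) - (k:ℤ) - 1)‖))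
        = L * ∑ k ∈ Finset.range τ, ‖Δ ((t:ℤ) - (k:ℤ) - 1)‖ := by
      field_simp
    rw [h3] at h2
    exact h2
  -- bound on ‖x (t+1) - x (tj t 0)‖
  have h1d : ∀ t : ℕ, ‖x (t+1) - x (tj t ⟨0, hm⟩)‖ ≤ ‖Δ (t:ℤ)‖ + ∑ k ∈ Finset.range τ, ‖Δ ((t:ℤ) - (k:ℤ) - 1)‖ := by
    intro t
    have h1 : ‖x (t+1) - x (tj t ⟨0,hm⟩)‖ ≤ ‖x (t+1) - x t‖ + ‖x t - x (tj t ⟨0,hm⟩)‖ := by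
      have : x (t+1) - x (tj t ⟨0,hm⟩) = (x (t+1) - x t) + (x t - x (tj t ⟨0,hm⟩)) := by abel
      rw [this]; exact norm_add_le _ _
    have h2 := hB t (tj t ⟨0,hm⟩) (htj t ⟨0,hm⟩).1 (htj t ⟨0,hm⟩).2
    rw [← hΔnat t] at h1
    linarith
  -- error bound
  have hepsn : ∀ t : ℕ, ‖eps t‖ ≤ Real.sqrt c₁ * ‖Δ ((t:ℤ) - 1)‖ := by
    intro t
    rcases Nat.eq_zero_or_pos t with h0 | h1
    · subst h0
      rw [heps0, norm_zero]
      positivity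
    · have h2 := herr t h1
      have h4 : Real.sqrt (‖eps t‖^2) ≤ Real.sqrt (c₁ * ‖Δ ((t:ℤ)-1)‖^2) := Real.sqrt_le_sqrt h2
      rw [Real.sqrt_mul hc₁.le] at h4
      rw [Real.sqrt_sq (norm_nonneg (eps t)), Real.sqrt_sq (norm_nonneg (Δ ((t:ℤ)-1)))] at h4
      exact h4
  -- descent lemma for smooth part
  have hfdesc : ∀ u v : EuclideanSpace ℝ (Fin p),
      (m:ℝ)⁻¹ * ∑ j, Lf j v ≤ (m:ℝ)⁻¹ * ∑ j, Lf j u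
        + ⟪(m:ℝ)⁻¹ • ∑ j, gradient (Lf j) u, v - u⟫ + L/2 * ‖v - u‖^2 := by
    intro u v
    have hsum : ∑ j, Lf j v ≤ ∑ j, (Lf j u + ⟪gradient (Lf j) u, v - u⟫ + L/2 * ‖v - u‖^2) :=
      Finset.sum_le_sum (fun j _ => aux_descent (hdiff j) (hlip j) u v)
    rw [Finset.sum_add_distrib, Finset.sum_add_distrib, Finset.sum_const, Finset.card_univ,
      Fintype.card_fin, nsmul_eq_mul] at hsum
    have hinner : ⟪(m:ℝ)⁻¹ • ∑ j, gradient (Lf j) u, v - u⟫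
        = (m:ℝ)⁻¹ * ∑ j, ⟪gradient (Lf j) u, v - u⟫ := by
      rw [real_inner_smul_left, sum_inner]
    rw [hinner]
    have h2 := mul_le_mul_of_nonneg_left hsum (le_of_lt (inv_pos.2 hm'))
    rw [mul_add, mul_add] at h2
    have h3 : (m:ℝ)⁻¹ * ((m:ℝ) * (L/2 * ‖v - u‖^2)) = L/2 * ‖v - u‖^2 := by field_simp
    rw [h3] at h2
    linarith
  -- h-part descent via strong convexity
  have hkey : ∀ t : ℕ, h (x (t+1)) ≤ h (x t)
      + ⟪eps t - gradient (Lf ⟨0, hm⟩) (x (t+1)) - (m:ℝ)⁻¹ • ∑ j, gradient (Lf j) (x (tj t j))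
          + gradient (Lf ⟨0, hm⟩) (x (tj t ⟨0, hm⟩)), Δ (t:ℤ)⟫
      - (ρ + γ)/2 * ‖Δ (t:ℤ)‖^2 := by
    intro t
    set w₀ := eps t - gradient (Lf ⟨0, hm⟩) (x (t+1)) - (m:ℝ)⁻¹ • ∑ j, gradient (Lf j) (x (tj t j))
      + gradient (Lf ⟨0, hm⟩) (x (tj t ⟨0, hm⟩)) with hw₀
    have hmid : ∀ a b : EuclideanSpace ℝ (Fin p),
        (fun y => h y + ρ/2 * ‖y - x t‖^2) ((1/2:ℝ) • a + (1/2:ℝ) • b)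
          ≤ 1/2 * (fun y => h y + ρ/2 * ‖y - x t‖^2) a + 1/2 * (fun y => h y + ρ/2 * ‖y - x t‖^2) b
            - γ/8 * ‖a - b‖^2 := by
      intro a b
      have hsc := (hstrong (x t)).2 (Set.mem_univ a) (Set.mem_univ b)
        (by norm_num : (0:ℝ) ≤ 1/2) (by norm_num : (0:ℝ) ≤ 1/2) (by norm_num)
      simp only [smul_eq_mul] at hsc ⊢
      have : ρ / 2 = ρ/2 := rfl
      nlinarith [hsc]
    have hs : ∀ y, (fun y => h y + ρ/2 * ‖y - x t‖^2) (x (t+1)) + ⟪w₀, y - x (t+1)⟫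
        ≤ (fun y => h y + ρ/2 * ‖y - x t‖^2) y := by
      intro y
      have h1 := hsub t y
      have hwrel : eps t - gradient (Lf ⟨0, hm⟩) (x (t + 1)) - (((m : ℝ)⁻¹ • ∑ j, gradient (Lf j) (x (tj t j)))) +
          gradient (Lf ⟨0, hm⟩) (x (tj t ⟨0, hm⟩)) - ρ • (x (t + 1) - x t) = w₀ - ρ • Δ (t:ℤ) := by
        rw [hw₀, hΔnat]
      rw [hwrel, inner_sub_left, real_inner_smul_left] at h1
      have hexp : ‖y - x t‖^2 = ‖Δ (t:ℤ)‖^2 + 2*⟪Δ (t:ℤ), y - x (t+1)⟫ + ‖y - x (t+1)‖^2 := by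
        have e : y - x t = Δ (t:ℤ) + (y - x (t+1)) := by rw [hΔnat]; abel
        rw [e, norm_add_sq_real]
      have hn1 : ‖x (t+1) - x t‖ = ‖Δ (t:ℤ)‖ := by rw [hΔnat]
      simp only
      rw [hn1, hexp]
      nlinarith [h1, mul_nonneg hρ.le (sq_nonneg ‖y - x (t+1)‖)]
    have hcon := aux_subgrad_strong (φ := fun y => h y + ρ/2 * ‖y - x t‖^2) (γ := γ) hmid hs (x t)
    have hn3 : x t - x (t+1) = -Δ (t:ℤ) := by rw [hΔnat]; abel
    rw [hn3, inner_neg_right, norm_neg, sub_self, norm_zero] at hcon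
    have hn1 : ‖x (t+1) - x t‖ = ‖Δ (t:ℤ)‖ := by rw [hΔnat]
    rw [hn1] at hcon
    linarith [hcon]
  -- one-step Lyapunov inequality
  have hstep : ∀ t : ℕ,
      (m:ℝ)⁻¹ * ∑ j, Lf j (x (t+1)) + h (x (t+1)) ≤ (m:ℝ)⁻¹ * ∑ j, Lf j (x t) + h (x t)
        + ((L - ρ - γ)/2 + 1/2 + L + L*δ*(τ:ℝ)) * ‖Δ (t:ℤ)‖^2
        + c₁/2 * ‖Δ ((t:ℤ) - 1)‖^2
        + L/δ * ∑ k ∈ Finset.range τ, ‖Δ ((t:ℤ) - (k:ℤ) - 1)‖^2 := by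
    intro t
    have F1 := hkey t
    have F2 := hfdesc (x t) (x (t+1))
    rw [show x (t+1) - x t = Δ (t:ℤ) from (hΔnat t).symm] at F2
    have hd0 : (0:ℝ) ≤ ‖Δ (t:ℤ)‖ := norm_nonneg _
    have hB0 : (0:ℝ) ≤ ∑ k ∈ Finset.range τ, ‖Δ ((t:ℤ) - (k:ℤ) - 1)‖ :=
      Finset.sum_nonneg (fun k _ => norm_nonneg _)
    have F3 : ⟪eps t - gradient (Lf ⟨0, hm⟩) (x (t+1)) - (m:ℝ)⁻¹ • ∑ j, gradient (Lf j) (x (tj t j))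
          + gradient (Lf ⟨0, hm⟩) (x (tj t ⟨0, hm⟩)), Δ (t:ℤ)⟫
        + ⟪(m:ℝ)⁻¹ • ∑ j, gradient (Lf j) (x t), Δ (t:ℤ)⟫
        = ⟪eps t, Δ (t:ℤ)⟫
        + ⟪gradient (Lf ⟨0, hm⟩) (x (tj t ⟨0, hm⟩)) - gradient (Lf ⟨0, hm⟩) (x (t+1)), Δ (t:ℤ)⟫
        + ⟪(m:ℝ)⁻¹ • ∑ j, gradient (Lf j) (x t) - (m:ℝ)⁻¹ • ∑ j, gradient (Lf j) (x (tj t j)), Δ (t:ℤ)⟫ := by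
      rw [← inner_add_left, ← inner_add_left, ← inner_add_left]
      congr 1
      abel
    have F4 : ⟪eps t, Δ (t:ℤ)⟫ ≤ c₁/2 * ‖Δ ((t:ℤ)-1)‖^2 + 1/2 * ‖Δ (t:ℤ)‖^2 := by
      have i1 := real_inner_le_norm (eps t) (Δ (t:ℤ))
      have i2 := mul_le_mul_of_nonneg_right (hepsn t) hd0
      have i3 : Real.sqrt c₁ ^ 2 = c₁ := Real.sq_sqrt hc₁.le
      nlinarith [sq_nonneg (Real.sqrt c₁ * ‖Δ ((t:ℤ)-1)‖ - ‖Δ (t:ℤ)‖)]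
    have F5 : ⟪gradient (Lf ⟨0, hm⟩) (x (tj t ⟨0, hm⟩)) - gradient (Lf ⟨0, hm⟩) (x (t+1)), Δ (t:ℤ)⟫
        ≤ L * ‖Δ (t:ℤ)‖^2 + L * ((∑ k ∈ Finset.range τ, ‖Δ ((t:ℤ) - (k:ℤ) - 1)‖) * ‖Δ (t:ℤ)‖) := by
      have i1 := real_inner_le_norm (gradient (Lf ⟨0, hm⟩) (x (tj t ⟨0, hm⟩)) - gradient (Lf ⟨0, hm⟩) (x (t+1))) (Δ (t:ℤ))
      have i2 : ‖gradient (Lf ⟨0, hm⟩) (x (tj t ⟨0, hm⟩)) - gradient (Lf ⟨0, hm⟩) (x (t+1))‖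
          ≤ L * (‖Δ (t:ℤ)‖ + ∑ k ∈ Finset.range τ, ‖Δ ((t:ℤ) - (k:ℤ) - 1)‖) := by
        refine (hlip _ _ _).trans ?_
        rw [norm_sub_rev]
        exact mul_le_mul_of_nonneg_left (h1d t) hL.le
      nlinarith [mul_le_mul_of_nonneg_right i2 hd0]
    have F6 : ⟪(m:ℝ)⁻¹ • ∑ j, gradient (Lf j) (x t) - (m:ℝ)⁻¹ • ∑ j, gradient (Lf j) (x (tj t j)), Δ (t:ℤ)⟫
        ≤ L * ((∑ k ∈ Finset.range τ, ‖Δ ((t:ℤ) - (k:ℤ) - 1)‖) * ‖Δ (t:ℤ)‖) := by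
      have i1 := real_inner_le_norm ((m:ℝ)⁻¹ • ∑ j, gradient (Lf j) (x t) - (m:ℝ)⁻¹ • ∑ j, gradient (Lf j) (x (tj t j))) (Δ (t:ℤ))
      nlinarith [mul_le_mul_of_nonneg_right (hgd t) hd0]
    have F7 : 2 * (L * ((∑ k ∈ Finset.range τ, ‖Δ ((t:ℤ) - (k:ℤ) - 1)‖) * ‖Δ (t:ℤ)‖))
        ≤ L/δ * (∑ k ∈ Finset.range τ, ‖Δ ((t:ℤ) - (k:ℤ) - 1)‖^2) + L*δ*(τ:ℝ)*‖Δ (t:ℤ)‖^2 := by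
      have base : ∀ k ∈ Finset.range τ, ‖Δ ((t:ℤ) - (k:ℤ) - 1)‖ * ‖Δ (t:ℤ)‖
          ≤ 1/(2*δ) * ‖Δ ((t:ℤ) - (k:ℤ) - 1)‖^2 + δ/2 * ‖Δ (t:ℤ)‖^2 := by
        intro k _
        rw [← mul_le_mul_iff_of_pos_right (show (0:ℝ) < 2*δ by positivity)]
        have hx1 : (1/(2*δ) * ‖Δ ((t:ℤ) - (k:ℤ) - 1)‖^2 + δ/2 * ‖Δ (t:ℤ)‖^2) * (2*δ)
            = ‖Δ ((t:ℤ) - (k:ℤ) - 1)‖^2 + δ^2 * ‖Δ (t:ℤ)‖^2 := by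
          field_simp
        rw [hx1]
        nlinarith [sq_nonneg (‖Δ ((t:ℤ) - (k:ℤ) - 1)‖ - δ * ‖Δ (t:ℤ)‖)]
      have hsum := Finset.sum_le_sum base
      rw [← Finset.sum_mul] at hsum
      rw [Finset.sum_add_distrib, ← Finset.mul_sum, Finset.sum_const, Finset.card_range, nsmul_eq_mul] at hsum
      have h2 := mul_le_mul_of_nonneg_left hsum hL.le
      have e : L * (1/(2*δ) * (∑ k ∈ Finset.range τ, ‖Δ ((t:ℤ) - (k:ℤ) - 1)‖^2) + (τ:ℝ) * (δ/2 * ‖Δ (t:ℤ)‖^2)) * 2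
          = L/δ * (∑ k ∈ Finset.range τ, ‖Δ ((t:ℤ) - (k:ℤ) - 1)‖^2) + L*δ*(τ:ℝ)*‖Δ (t:ℤ)‖^2 := by
        field_simp
      nlinarith [h2, e]
    linarith [F1, F2, F3, F4, F5, F6, F7]
  -- shifted sums bounded by straight sums
  have hshift : ∀ k N : ℕ, ∑ t ∈ Finset.range N, ‖Δ ((t:ℤ) - (k:ℤ) - 1)‖^2
      ≤ ∑ t ∈ Finset.range N, ‖Δ (t:ℤ)‖^2 := by
    intro k N
    have key : ∀ M : ℕ, ∑ t ∈ Finset.range M, ‖Δ ((t:ℤ) - (k:ℤ) - 1)‖^2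
        = ∑ s ∈ Finset.range (M - (k+1)), ‖Δ (s:ℤ)‖^2 := by
      intro M
      induction M with
      | zero => simp
      | succ n ih =>
        rw [Finset.sum_range_succ, ih]
        by_cases hkn : k + 1 ≤ n
        · have e1 : ((n:ℤ) - (k:ℤ) - 1) = ((n - (k+1) : ℕ) : ℤ) := by omega
          have e2 : n + 1 - (k+1) = (n - (k+1)) + 1 := by omega
          rw [e1, e2, Finset.sum_range_succ]
        · have e1 : Δ ((n:ℤ) - (k:ℤ) - 1) = 0 := hΔneg _ (by omega)
          have e2 : n + 1 - (k+1) = n - (k+1) := by omega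
          rw [e1, e2]
          simp
    rw [key N]
    exact Finset.sum_le_sum_of_subset_of_nonneg (Finset.range_subset_range.2 (show N - (k+1) ≤ N by omega))
      (fun _ _ _ => by positivity)
  -- partial sums bounded
  have hb : (0:ℝ) < (ρ + γ - L)/2 - 1/2 - L - L*δ*(τ:ℝ) - c₁/2 - L*(τ:ℝ)/δ := by
    have e : (ρ + γ - L)/2 - 1/2 - L - L*δ*(τ:ℝ) - c₁/2 - L*(τ:ℝ)/δ
        = (ρ - c₁ - 2*L*(τ:ℝ)/δ)/2 + (γ - 3*L - 2*L*δ*(τ:ℝ) - 1)/2 := by ring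
    rw [e]
    have h1 : 0 < ρ - c₁ - 2*L*(τ:ℝ)/δ := by linarith [hA2]
    have h2 : 0 < γ - 3*L - 2*L*δ*(τ:ℝ) - 1 := by linarith [hA1]
    linarith
  have hSbound : ∀ N : ℕ, ((ρ + γ - L)/2 - 1/2 - L - L*δ*(τ:ℝ) - c₁/2 - L*(τ:ℝ)/δ) *
      ∑ t ∈ Finset.range N, ‖Δ (t:ℤ)‖^2 ≤ ((m:ℝ)⁻¹ * ∑ j, Lf j (x 0) + h (x 0)) - Llo := by
    intro N
    have htele : ∑ t ∈ Finset.range N, (((m:ℝ)⁻¹ * ∑ j, Lf j (x (t+1)) + h (x (t+1))) - ((m:ℝ)⁻¹ * ∑ j, Lf j (x t) + h (x t)))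
        = ((m:ℝ)⁻¹ * ∑ j, Lf j (x N) + h (x N)) - ((m:ℝ)⁻¹ * ∑ j, Lf j (x 0) + h (x 0)) :=
      Finset.sum_range_sub (fun t => (m:ℝ)⁻¹ * ∑ j, Lf j (x t) + h (x t)) N
    have hsum1 : ∑ t ∈ Finset.range N, ‖Δ ((t:ℤ) - 1)‖^2 ≤ ∑ t ∈ Finset.range N, ‖Δ (t:ℤ)‖^2 := by
      have := hshift 0 N
      simpa using this
    have hsum2 : ∑ t ∈ Finset.range N, (∑ k ∈ Finset.range τ, ‖Δ ((t:ℤ) - (k:ℤ) - 1)‖^2)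
        ≤ (τ:ℝ) * ∑ t ∈ Finset.range N, ‖Δ (t:ℤ)‖^2 := by
      rw [Finset.sum_comm]
      calc ∑ k ∈ Finset.range τ, ∑ t ∈ Finset.range N, ‖Δ ((t:ℤ)-(k:ℤ)-1)‖^2
          ≤ ∑ _k ∈ Finset.range τ, ∑ t ∈ Finset.range N, ‖Δ (t:ℤ)‖^2 :=
            Finset.sum_le_sum (fun k _ => hshift k N)
        _ = (τ:ℝ) * ∑ t ∈ Finset.range N, ‖Δ (t:ℤ)‖^2 := by
            rw [Finset.sum_const, Finset.card_range, nsmul_eq_mul]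
    have hstepsum : ∑ t ∈ Finset.range N, (((m:ℝ)⁻¹ * ∑ j, Lf j (x (t+1)) + h (x (t+1))) - ((m:ℝ)⁻¹ * ∑ j, Lf j (x t) + h (x t)))
        ≤ ∑ t ∈ Finset.range N, (((L - ρ - γ)/2 + 1/2 + L + L*δ*(τ:ℝ)) * ‖Δ (t:ℤ)‖^2
          + c₁/2 * ‖Δ ((t:ℤ) - 1)‖^2
          + L/δ * ∑ k ∈ Finset.range τ, ‖Δ ((t:ℤ) - (k:ℤ) - 1)‖^2) :=
      Finset.sum_le_sum (fun t _ => by linarith [hstep t])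
    have expand : ∑ t ∈ Finset.range N, (((L - ρ - γ)/2 + 1/2 + L + L*δ*(τ:ℝ)) * ‖Δ (t:ℤ)‖^2
          + c₁/2 * ‖Δ ((t:ℤ) - 1)‖^2
          + L/δ * ∑ k ∈ Finset.range τ, ‖Δ ((t:ℤ) - (k:ℤ) - 1)‖^2)
        = ((L - ρ - γ)/2 + 1/2 + L + L*δ*(τ:ℝ)) * (∑ t ∈ Finset.range N, ‖Δ (t:ℤ)‖^2)
          + c₁/2 * (∑ t ∈ Finset.range N, ‖Δ ((t:ℤ) - 1)‖^2)
          + L/δ * (∑ t ∈ Finset.range N, ∑ k ∈ Finset.range τ, ‖Δ ((t:ℤ) - (k:ℤ) - 1)‖^2) := by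
      rw [Finset.sum_add_distrib, Finset.sum_add_distrib, ← Finset.mul_sum, ← Finset.mul_sum, ← Finset.mul_sum]
    have m1 : c₁/2 * (∑ t ∈ Finset.range N, ‖Δ ((t:ℤ) - 1)‖^2)
        ≤ c₁/2 * ∑ t ∈ Finset.range N, ‖Δ (t:ℤ)‖^2 :=
      mul_le_mul_of_nonneg_left hsum1 (by positivity)
    have m2 : L/δ * (∑ t ∈ Finset.range N, ∑ k ∈ Finset.range τ, ‖Δ ((t:ℤ) - (k:ℤ) - 1)‖^2)
        ≤ L/δ * ((τ:ℝ) * ∑ t ∈ Finset.range N, ‖Δ (t:ℤ)‖^2) :=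
      mul_le_mul_of_nonneg_left hsum2 (by positivity)
    have hLN := hLlo (x N)
    have efinal : ((ρ + γ - L)/2 - 1/2 - L - L*δ*(τ:ℝ) - c₁/2 - L*(τ:ℝ)/δ) * (∑ t ∈ Finset.range N, ‖Δ (t:ℤ)‖^2)
        = -(((L - ρ - γ)/2 + 1/2 + L + L*δ*(τ:ℝ)) * (∑ t ∈ Finset.range N, ‖Δ (t:ℤ)‖^2)
          + c₁/2 * (∑ t ∈ Finset.range N, ‖Δ (t:ℤ)‖^2)
          + L/δ * ((τ:ℝ) * ∑ t ∈ Finset.range N, ‖Δ (t:ℤ)‖^2)) := by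
      field_simp
      ring
    rw [efinal]
    rw [htele] at hstepsum
    rw [expand] at hstepsum
    linarith [hstepsum, m1, m2, hLN]
  -- summability and convergence of increments
  have hD0 : Filter.Tendsto (fun t : ℕ => ‖Δ (t:ℤ)‖) Filter.atTop (nhds 0) := by
    have hsummable : Summable (fun t : ℕ => ‖Δ (t:ℤ)‖^2) := by
      apply summable_of_sum_range_le (c := (((m:ℝ)⁻¹ * ∑ j, Lf j (x 0) + h (x 0)) - Llo) /
        ((ρ + γ - L)/2 - 1/2 - L - L*δ*(τ:ℝ) - c₁/2 - L*(τ:ℝ)/δ))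
      · intro t
        positivity
      · intro N
        rw [le_div_iff₀ hb]
        linarith [hSbound N]
    have h2 := hsummable.tendsto_atTop_zero
    have h3 := (Real.continuous_sqrt.tendsto 0).comp h2
    have heq : (fun t : ℕ => Real.sqrt (‖Δ (t:ℤ)‖^2)) = fun t : ℕ => ‖Δ (t:ℤ)‖ :=
      funext (fun t => Real.sqrt_sq (norm_nonneg _))
    rw [show (0:ℝ) = Real.sqrt 0 from Real.sqrt_zero.symm]
    rw [← heq]
    exact h3
  -- convergence of shifted increments
  have hDshift : ∀ k : ℕ, Filter.Tendsto (fun t : ℕ => ‖Δ ((t:ℤ) - (k:ℤ))‖) Filter.atTop (nhds 0) := by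
    intro k
    have hcomp : Filter.Tendsto (fun t : ℕ => ‖Δ (((t - k : ℕ)):ℤ)‖) Filter.atTop (nhds 0) :=
      hD0.comp (Filter.tendsto_sub_atTop_nat k)
    apply hcomp.congr'
    filter_upwards [Filter.eventually_ge_atTop k] with t ht
    have e : (((t - k : ℕ)):ℤ) = (t:ℤ) - (k:ℤ) := by omega
    rw [e]
  -- the prox-gradient pointwise bound
  have hGbound : ∀ t : ℕ, ‖(x t - prox (x t - (m : ℝ)⁻¹ • (∑ j, gradient (Lf j) (x t))))‖ ≤
      (2 + ρ) * ‖Δ (t : ℤ)‖ + 2 * L * ∑ k ∈ Finset.range (τ + 1), ‖Δ ((t : ℤ) - (k : ℤ))‖ +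
        Real.sqrt c₁ * ‖Δ ((t : ℤ) - 1)‖ := by
    intro t
    set w := eps t - gradient (Lf ⟨0, hm⟩) (x (t + 1)) - (((m : ℝ)⁻¹ • ∑ j, gradient (Lf j) (x (tj t j)))) +
        gradient (Lf ⟨0, hm⟩) (x (tj t ⟨0, hm⟩)) - ρ • (x (t + 1) - x t) with hw
    have hx1 : x (t+1) = prox (x (t+1) + w) := by
      apply hproxuniq
      intro y
      have h1 := hsub t y
      rw [← hw] at h1
      have e1 : x (t+1) - (x (t+1) + w) = -w := by abel
      have e2 : y - (x (t+1) + w) = (y - x (t+1)) - w := by abel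
      rw [e1, e2, norm_neg, norm_sub_sq_real (y - x (t+1)) w]
      have hcomm := real_inner_comm w (y - x (t+1))
      nlinarith [h1, hcomm, sq_nonneg ‖y - x (t+1)‖]
    have hlipprox := aux_prox_lip hconv hprox
    have htri : ‖x t - prox (x t - (m:ℝ)⁻¹ • (∑ j, gradient (Lf j) (x t)))‖
        ≤ ‖x t - x (t+1)‖ + ‖prox (x (t+1) + w) - prox (x t - (m:ℝ)⁻¹ • (∑ j, gradient (Lf j) (x t)))‖ := by
      have e3 : x t - prox (x t - (m:ℝ)⁻¹ • (∑ j, gradient (Lf j) (x t)))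
          = (x t - x (t+1)) + (prox (x (t+1) + w) - prox (x t - (m:ℝ)⁻¹ • (∑ j, gradient (Lf j) (x t)))) := by
        rw [← hx1]
        abel
      rw [e3]
      exact norm_add_le _ _
    have hzdiff := hlipprox (x (t+1) + w) (x t - (m:ℝ)⁻¹ • (∑ j, gradient (Lf j) (x t)))
    have e4 : (x (t+1) + w) - (x t - (m:ℝ)⁻¹ • (∑ j, gradient (Lf j) (x t)))
        = ((1:ℝ) - ρ) • Δ (t:ℤ) + eps t
          + (gradient (Lf ⟨0, hm⟩) (x (tj t ⟨0, hm⟩)) - gradient (Lf ⟨0, hm⟩) (x (t+1)))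
          + ((m:ℝ)⁻¹ • ∑ j, gradient (Lf j) (x t) - (m:ℝ)⁻¹ • ∑ j, gradient (Lf j) (x (tj t j))) := by
      rw [hw, hΔnat, sub_smul, one_smul]
      abel
    have hznorm : ‖(x (t+1) + w) - (x t - (m:ℝ)⁻¹ • (∑ j, gradient (Lf j) (x t)))‖
        ≤ (1 + ρ) * ‖Δ (t:ℤ)‖ + Real.sqrt c₁ * ‖Δ ((t:ℤ) - 1)‖
          + L * (‖Δ (t:ℤ)‖ + ∑ k ∈ Finset.range τ, ‖Δ ((t:ℤ) - (k:ℤ) - 1)‖)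
          + L * ∑ k ∈ Finset.range τ, ‖Δ ((t:ℤ) - (k:ℤ) - 1)‖ := by
      rw [e4]
      have n1 : ‖((1:ℝ) - ρ) • Δ (t:ℤ)‖ ≤ (1 + ρ) * ‖Δ (t:ℤ)‖ := by
        rw [norm_smul, Real.norm_eq_abs]
        have : |(1:ℝ) - ρ| ≤ 1 + ρ := by
          rw [abs_le]
          constructor <;> linarith
        exact mul_le_mul_of_nonneg_right this (norm_nonneg _)
      have n2 := hepsn t
      have n3 : ‖gradient (Lf ⟨0, hm⟩) (x (tj t ⟨0, hm⟩)) - gradient (Lf ⟨0, hm⟩) (x (t+1))‖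
          ≤ L * (‖Δ (t:ℤ)‖ + ∑ k ∈ Finset.range τ, ‖Δ ((t:ℤ) - (k:ℤ) - 1)‖) := by
        refine (hlip _ _ _).trans ?_
        rw [norm_sub_rev]
        exact mul_le_mul_of_nonneg_left (h1d t) hL.le
      have n4 := hgd t
      calc ‖((1:ℝ) - ρ) • Δ (t:ℤ) + eps t
          + (gradient (Lf ⟨0, hm⟩) (x (tj t ⟨0, hm⟩)) - gradient (Lf ⟨0, hm⟩) (x (t+1)))
          + ((m:ℝ)⁻¹ • ∑ j, gradient (Lf j) (x t) - (m:ℝ)⁻¹ • ∑ j, gradient (Lf j) (x (tj t j)))‖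
          ≤ ‖((1:ℝ) - ρ) • Δ (t:ℤ) + eps t
            + (gradient (Lf ⟨0, hm⟩) (x (tj t ⟨0, hm⟩)) - gradient (Lf ⟨0, hm⟩) (x (t+1)))‖
            + ‖(m:ℝ)⁻¹ • ∑ j, gradient (Lf j) (x t) - (m:ℝ)⁻¹ • ∑ j, gradient (Lf j) (x (tj t j))‖ :=
          norm_add_le _ _
        _ ≤ ‖((1:ℝ) - ρ) • Δ (t:ℤ) + eps t‖
            + ‖gradient (Lf ⟨0, hm⟩) (x (tj t ⟨0, hm⟩)) - gradient (Lf ⟨0, hm⟩) (x (t+1))‖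
            + ‖(m:ℝ)⁻¹ • ∑ j, gradient (Lf j) (x t) - (m:ℝ)⁻¹ • ∑ j, gradient (Lf j) (x (tj t j))‖ := by
          have := norm_add_le (((1:ℝ) - ρ) • Δ (t:ℤ) + eps t)
            (gradient (Lf ⟨0, hm⟩) (x (tj t ⟨0, hm⟩)) - gradient (Lf ⟨0, hm⟩) (x (t+1)))
          linarith
        _ ≤ ‖((1:ℝ) - ρ) • Δ (t:ℤ)‖ + ‖eps t‖
            + ‖gradient (Lf ⟨0, hm⟩) (x (tj t ⟨0, hm⟩)) - gradient (Lf ⟨0, hm⟩) (x (t+1))‖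
            + ‖(m:ℝ)⁻¹ • ∑ j, gradient (Lf j) (x t) - (m:ℝ)⁻¹ • ∑ j, gradient (Lf j) (x (tj t j))‖ := by
          have := norm_add_le (((1:ℝ) - ρ) • Δ (t:ℤ)) (eps t)
          linarith
        _ ≤ (1 + ρ) * ‖Δ (t:ℤ)‖ + Real.sqrt c₁ * ‖Δ ((t:ℤ) - 1)‖
            + L * (‖Δ (t:ℤ)‖ + ∑ k ∈ Finset.range τ, ‖Δ ((t:ℤ) - (k:ℤ) - 1)‖)
            + L * ∑ k ∈ Finset.range τ, ‖Δ ((t:ℤ) - (k:ℤ) - 1)‖ := by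
          linarith [n1, n2, n3, n4]
    have hnd : ‖x t - x (t+1)‖ = ‖Δ (t:ℤ)‖ := by
      rw [show x t - x (t+1) = -Δ (t:ℤ) by rw [hΔnat]; abel, norm_neg]
    have hsplit : ∑ k ∈ Finset.range (τ + 1), ‖Δ ((t:ℤ) - (k:ℤ))‖
        = (∑ k ∈ Finset.range τ, ‖Δ ((t:ℤ) - (k:ℤ) - 1)‖) + ‖Δ (t:ℤ)‖ := by
      rw [Finset.sum_range_succ']
      congr 1
      · refine Finset.sum_congr rfl (fun k _ => ?_)
        congr 1
        push_cast
        ring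
    have hBnn : (0:ℝ) ≤ ∑ k ∈ Finset.range τ, ‖Δ ((t:ℤ) - (k:ℤ) - 1)‖ :=
      Finset.sum_nonneg (fun k _ => norm_nonneg _)
    rw [hsplit]
    have hd0 : (0:ℝ) ≤ ‖Δ (t:ℤ)‖ := norm_nonneg _
    linarith [htri, hzdiff, hznorm, hnd, mul_nonneg hL.le hd0]
  -- tendsto of prox-gradient norms
  have hG0 : Filter.Tendsto (fun t => ‖(x t - prox (x t - (m : ℝ)⁻¹ • (∑ j, gradient (Lf j) (x t))))‖)
      Filter.atTop (nhds 0) := by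
    have t1 : Filter.Tendsto (fun t : ℕ => (2 + ρ) * ‖Δ (t:ℤ)‖) Filter.atTop (nhds 0) := by
      simpa using hD0.const_mul (2 + ρ)
    have t2 : Filter.Tendsto (fun t : ℕ => 2 * L * ∑ k ∈ Finset.range (τ + 1), ‖Δ ((t:ℤ) - (k:ℤ))‖)
        Filter.atTop (nhds 0) := by
      have hsum : Filter.Tendsto (fun t : ℕ => ∑ k ∈ Finset.range (τ + 1), ‖Δ ((t:ℤ) - (k:ℤ))‖)
          Filter.atTop (nhds 0) := by
        have := tendsto_finset_sum (Finset.range (τ + 1)) (fun k _ => hDshift k)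
        simpa using this
      simpa using hsum.const_mul (2 * L)
    have t3 : Filter.Tendsto (fun t : ℕ => Real.sqrt c₁ * ‖Δ ((t:ℤ) - 1)‖) Filter.atTop (nhds 0) := by
      have h1 : Filter.Tendsto (fun t : ℕ => ‖Δ ((t:ℤ) - ((1:ℕ):ℤ))‖) Filter.atTop (nhds 0) := hDshift 1
      have h1' : Filter.Tendsto (fun t : ℕ => ‖Δ ((t:ℤ) - 1)‖) Filter.atTop (nhds 0) := by
        simpa using h1
      simpa using h1'.const_mul (Real.sqrt c₁)
    have hbig := (t1.add t2).add t3
    rw [show (0:ℝ) + 0 + 0 = 0 by norm_num] at hbig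
    exact squeeze_zero (fun t => norm_nonneg _) hGbound hbig
  refine ⟨?_, hGbound, hG0, ?_⟩
  · have : (fun t : ℕ => x (t+1) - x t) = fun t : ℕ => Δ (t:ℤ) := by
      funext t; rw [hΔnat t]
    rw [this]
    exact tendsto_zero_iff_norm_tendsto_zero.2 hD0
  · rintro xhat ⟨φ, hφmono, hφlim⟩
    have hgradc : ∀ j : Fin m, Continuous (gradient (Lf j)) := by
      intro j
      apply LipschitzWith.continuous (K := L.toNNReal)
      apply LipschitzWith.of_dist_le_mul
      intro u v
      rw [dist_eq_norm, dist_eq_norm]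
      calc ‖gradient (Lf j) u - gradient (Lf j) v‖ ≤ L * ‖u - v‖ := hlip j u v
        _ = (L.toNNReal : ℝ) * ‖u - v‖ := by rw [Real.coe_toNNReal L hL.le]
    have hproxc : Continuous prox := by
      apply LipschitzWith.continuous (K := 1)
      apply LipschitzWith.of_dist_le_mul
      intro u v
      rw [dist_eq_norm, dist_eq_norm]
      simpa using aux_prox_lip hconv hprox u v
    have hcont : Continuous (fun u : EuclideanSpace ℝ (Fin p) =>
        u - prox (u - (m:ℝ)⁻¹ • (∑ j, gradient (Lf j) u))) := by
      refine continuous_id.sub (hproxc.comp (continuous_id.sub ?_))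
      have hs : Continuous (fun u : EuclideanSpace ℝ (Fin p) => ∑ j, gradient (Lf j) u) :=
        continuous_finset_sum _ (fun j _ => hgradc j)
      exact hs.const_smul ((m:ℝ)⁻¹)
    have hsub0 : Filter.Tendsto (fun n => ‖x (φ n) - prox (x (φ n) - (m:ℝ)⁻¹ • (∑ j, gradient (Lf j) (x (φ n))))‖)
        Filter.atTop (nhds 0) := by
      have := hG0.comp hφmono.tendsto_atTop
      simpa [Function.comp_def] using this
    have hsub1 : Filter.Tendsto (fun n => ‖x (φ n) - prox (x (φ n) - (m:ℝ)⁻¹ • (∑ j, gradient (Lf j) (x (φ n))))‖)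
        Filter.atTop (nhds ‖xhat - prox (xhat - (m:ℝ)⁻¹ • (∑ j, gradient (Lf j) xhat))‖) := by
      have := ((hcont.tendsto xhat).comp hφlim).norm
      simpa [Function.comp] using this
    have hzero : ‖xhat - prox (xhat - (m:ℝ)⁻¹ • (∑ j, gradient (Lf j) xhat))‖ = 0 :=
      tendsto_nhds_unique hsub1 hsub0
    have := norm_eq_zero.1 hzero
    exact sub_eq_zero.1 this
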